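/- arXiv:math/0109022 — 4 statements merged into one kernel-verified Lean document; each statement's English description precedes it below -/
import Mathlib

section
/- For all natural numbers n ≥ 1 and k ≥ 1, one has C(n+k-1, k-1) · (2n+2k-1) · n! ≥ k · C(2n+2k-1, n), where C(a,b) denotes the binomial coefficient. -/
/-!
With `N = n + k - 1`, cancelling the common factors `k (2N + 1)` turns the inequality into
`(2N)(2N - 1)⋯(N + k + 1) ≤ n! · N(N - 1)⋯(k + 1)`, a comparison of two falling factorials with
`n - 1` factors each. It holds factor by factor against `n! = 2 · 3 ⋯ n`, because
`2N - i ≤ (i + 2)(N - i)` whenever `i < N`.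
-/

open Nat

theorem descFactorial_two_mul_le_factorial_mul {M m : ℕ} (h : m ≤ M) :
    (2 * M).descFactorial m ≤ (m + 1)! * M.descFactorial m := by
  induction m with
  | zero => simp
  | succ m ih =>
    obtain ⟨t, rfl⟩ : ∃ t, M = m + 1 + t := Nat.exists_eq_add_of_le h
    have hfactor : 2 * (m + 1 + t) - m ≤ (m + 2) * (m + 1 + t - m) := by
      rw [show 2 * (m + 1 + t) - m = m + 2 + 2 * t by omega,
        show m + 1 + t - m = t + 1 by omega]
      nlinarith
    rw [descFactorial_succ, descFactorial_succ, factorial_succ]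
    calc (2 * (m + 1 + t) - m) * (2 * (m + 1 + t)).descFactorial m
        ≤ ((m + 2) * (m + 1 + t - m)) * ((m + 1)! * (m + 1 + t).descFactorial m) :=
          Nat.mul_le_mul hfactor (ih (by omega))
      _ = (m + 1 + 1) * (m + 1)! * ((m + 1 + t - m) * (m + 1 + t).descFactorial m) := by ring

/-- For all natural numbers `n ≥ 1` and `k ≥ 1`,
`C(n+k-1, k-1) * (2n+2k-1) * n! ≥ k * C(2n+2k-1, n)`. -/
theorem abelian_scroll_key_inequality (n k : ℕ) (hn : 1 ≤ n) (hk : 1 ≤ k) :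
    (n + k - 1).choose (k - 1) * (2 * n + 2 * k - 1) * Nat.factorial n ≥
      k * (2 * n + 2 * k - 1).choose n := by
  obtain ⟨m, rfl⟩ : ∃ m, n = m + 1 := ⟨n - 1, by omega⟩
  obtain ⟨j, rfl⟩ : ∃ j, k = j + 1 := ⟨k - 1, by omega⟩
  set N := m + j + 1
  rw [show m + 1 + (j + 1) - 1 = N by omega, show 2 * (m + 1) + 2 * (j + 1) - 1 = 2 * N + 1 by omega,
    Nat.add_sub_cancel]
  have hlhs : N.choose j * (m + 1)! = (j + 1) * N.descFactorial m := by
    rw [choose_symm_of_eq_add (by omega : N = j + (m + 1)), mul_comm,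
      ← descFactorial_eq_factorial_mul_choose, descFactorial_succ, show N - m = j + 1 by omega]
  have hrhs : (m + 1)! * (2 * N + 1).choose (m + 1) = (2 * N + 1) * (2 * N).descFactorial m := by
    rw [← descFactorial_eq_factorial_mul_choose, succ_descFactorial_succ]
  refine Nat.le_of_mul_le_mul_left ?_ (factorial_pos (m + 1))
  calc (m + 1)! * ((j + 1) * (2 * N + 1).choose (m + 1))
      = (j + 1) * (2 * N + 1) * (2 * N).descFactorial m := by rw [mul_left_comm, hrhs]; ring
    _ ≤ (j + 1) * (2 * N + 1) * ((m + 1)! * N.descFactorial m) :=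
      Nat.mul_le_mul_left _ (descFactorial_two_mul_le_factorial_mul (by omega))
    _ = (m + 1)! * (N.choose j * (2 * N + 1) * (m + 1)!) := by
      rw [show N.choose j * (2 * N + 1) * (m + 1)! = (2 * N + 1) * (N.choose j * (m + 1)!) by ring,
        hlhs]
      ring
end

section
/- For natural numbers n ≥ 1 and k ≥ 1, equality C(n+k-1, k-1) · (2n+2k-1) · n! = k · C(2n+2k-1, n) holds if and only if n = 1 or n = 2. -/
/-!
Clearing denominators, the equation says
`n! · (k+1)(k+2)⋯(k+n-1) = (n+2k)(n+2k+1)⋯(2n+2k-2)`, which holds for `n = 1, 2`.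
For `n ≥ 3` the factors compare as `(n+2k+j)/(k+1+j) ≤ (n+2+j)/(2+j)`, so the right-hand side
is at most the Catalan number `C(2n,n)/(n+1)` times `(k+1)⋯(k+n-1)`, and `C(2n,n) < (n+1)!`.
-/

open Nat Finset

theorem choose_eq_iff_factorial_eq (n k : ℕ) :
    (n + k).choose k * (2 * n + 2 * k + 1) * n ! = (k + 1) * (2 * n + 2 * k + 1).choose n ↔
      n ! * (n + k)! * (n + 2 * k + 1)! = (k + 1)! * (2 * n + 2 * k)! := by
  set c := k ! * n ! * (n + 2 * k + 1)!
  have hlhs : (n + k).choose k * (2 * n + 2 * k + 1) * n ! * c =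
      (2 * n + 2 * k + 1) * (n ! * (n + k)! * (n + 2 * k + 1)!) := by
    rw [← add_choose_mul_factorial_mul_factorial n k]; ring
  have hrhs : (k + 1) * (2 * n + 2 * k + 1).choose n * c =
      (2 * n + 2 * k + 1) * ((k + 1)! * (2 * n + 2 * k)!) := by
    have h := add_choose_mul_factorial_mul_factorial (n + 2 * k + 1) n
    rw [show n + 2 * k + 1 + n = 2 * n + 2 * k + 1 by ring, factorial_succ (2 * n + 2 * k)] at h
    rw [factorial_succ k]; linear_combination (k + 1) * k ! * h
  rw [← Nat.mul_left_inj (a := c) (by positivity), hlhs, hrhs, Nat.mul_right_inj (by omega)]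

theorem factorial_eq_iff_ascFactorial_eq (n k : ℕ) :
    (n + 1)! * (n + 1 + k)! * (n + 2 * k + 2)! = (k + 1)! * (2 * n + 2 * k + 2)! ↔
      (n + 1)! * (k + 2).ascFactorial n = (n + 2 * k + 3).ascFactorial n := by
  have hlow : (k + 1)! * (k + 2).ascFactorial n = (n + 1 + k)! := by
    rw [show n + 1 + k = k + 1 + n by ring]; exact factorial_mul_ascFactorial (k + 1) n
  have hhigh : (n + 2 * k + 2)! * (n + 2 * k + 3).ascFactorial n = (2 * n + 2 * k + 2)! := by
    rw [show 2 * n + 2 * k + 2 = n + 2 * k + 2 + n by ring]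
    exact factorial_mul_ascFactorial (n + 2 * k + 2) n
  rw [← hlow, ← hhigh]
  calc _ ↔ (k + 1)! * (n + 2 * k + 2)! * ((n + 1)! * (k + 2).ascFactorial n) =
        (k + 1)! * (n + 2 * k + 2)! * (n + 2 * k + 3).ascFactorial n := by
        constructor <;> intro h <;> linear_combination h
    _ ↔ _ := Nat.mul_right_inj (by positivity)

theorem centralBinom_lt_factorial_succ {n : ℕ} (hn : 3 ≤ n) : n.centralBinom < (n + 1)! := by
  induction n, hn using Nat.le_induction with
  | base => decide
  | succ n hn ih =>
    refine Nat.lt_of_mul_lt_mul_left (a := n + 1) ?_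
    rw [succ_mul_centralBinom_succ, factorial_succ (n + 1)]
    calc 2 * (2 * n + 1) * n.centralBinom ≤ (n + 1) * (n + 2) * n.centralBinom :=
          Nat.mul_le_mul_right _ (by nlinarith)
      _ < (n + 1) * (n + 2) * (n + 1)! := by gcongr
      _ = (n + 1) * ((n + 1 + 1) * (n + 1)!) := by ring

theorem centralBinom_mul_factorial_mul_factorial (n : ℕ) :
    n.centralBinom * n ! * n ! = (2 * n)! := by
  rw [centralBinom_eq_two_mul_choose, two_mul, add_choose_mul_factorial_mul_factorial]

theorem ascFactorial_lt_factorial_mul_factorial {n : ℕ} (hn : 2 ≤ n) :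
    (n + 3).ascFactorial n < (n + 1)! * (n + 1)! := by
  refine Nat.lt_of_mul_lt_mul_left (a := (n + 2)!) ?_
  calc (n + 2)! * (n + 3).ascFactorial n = (2 * (n + 1))! := by
        rw [show 2 * (n + 1) = n + 2 + n by ring]; exact factorial_mul_ascFactorial (n + 2) n
    _ = (n + 1).centralBinom * (n + 1)! * (n + 1)! :=
        (centralBinom_mul_factorial_mul_factorial (n + 1)).symm
    _ < (n + 2)! * (n + 1)! * (n + 1)! := by
        gcongr; exact centralBinom_lt_factorial_succ (by omega)
    _ = (n + 2)! * ((n + 1)! * (n + 1)!) := by ring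

theorem ascFactorial_lt_factorial_mul_ascFactorial {n : ℕ} (hn : 2 ≤ n) (k : ℕ) :
    (n + 2 * k + 3).ascFactorial n < (n + 1)! * (k + 2).ascFactorial n := by
  -- the two sides differ by `k * (n - 1 - j)`
  have hterm : ∀ j ∈ range n, (n + 2 * k + 3 + j) * (2 + j) ≤ (n + 3 + j) * (k + 2 + j) := by
    intro j hj
    have := Nat.mul_le_mul_left k (mem_range.mp hj)
    nlinarith
  have hprod : (n + 2 * k + 3).ascFactorial n * (n + 1)! ≤
      (n + 3).ascFactorial n * (k + 2).ascFactorial n := by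
    have hfact : (n + 1)! = (2 : ℕ).ascFactorial n := by
      rw [add_comm, ← factorial_mul_ascFactorial 1 n, factorial_one, one_mul]
    simp only [hfact, ascFactorial_eq_prod_range, ← prod_mul_distrib]
    exact prod_le_prod' hterm
  refine Nat.lt_of_mul_lt_mul_right (a := (n + 1)!) ?_
  calc (n + 2 * k + 3).ascFactorial n * (n + 1)!
      ≤ (n + 3).ascFactorial n * (k + 2).ascFactorial n := hprod
    _ < (n + 1)! * (n + 1)! * (k + 2).ascFactorial n := by
        gcongr
        exact ascFactorial_lt_factorial_mul_factorial hn
    _ = (n + 1)! * (k + 2).ascFactorial n * (n + 1)! := by ring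

/-- For `n ≥ 1`, `k ≥ 1`, equality `C(n+k-1, k-1) * (2n+2k-1) * n! = k * C(2n+2k-1, n)`
holds iff `n = 1` or `n = 2`. -/
theorem abelian_scroll_equality_iff (n k : ℕ) (hn : 1 ≤ n) (hk : 1 ≤ k) :
    (n + k - 1).choose (k - 1) * (2 * n + 2 * k - 1) * Nat.factorial n =
      k * (2 * n + 2 * k - 1).choose n ↔ n = 1 ∨ n = 2 := by
  obtain ⟨n, rfl⟩ : ∃ m, n = m + 1 := ⟨n - 1, by omega⟩
  obtain ⟨k, rfl⟩ : ∃ m, k = m + 1 := ⟨k - 1, by omega⟩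
  rw [show n + 1 + (k + 1) - 1 = n + 1 + k by omega, Nat.add_sub_cancel,
    show 2 * (n + 1) + 2 * (k + 1) - 1 = 2 * (n + 1) + 2 * k + 1 by omega,
    choose_eq_iff_factorial_eq, show n + 1 + 2 * k + 1 = n + 2 * k + 2 by ring,
    show 2 * (n + 1) + 2 * k = 2 * n + 2 * k + 2 by ring, factorial_eq_iff_ascFactorial_eq]
  constructor
  · intro h
    by_contra hsmall
    exact (ascFactorial_lt_factorial_mul_ascFactorial (by omega) k).ne' h
  · rintro (h | h)
    · obtain rfl : n = 0 := by omega
      simp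
    · obtain rfl : n = 1 := by omega
      simp [ascFactorial]
      ring
end

section
/- For all natural numbers n ≥ 3 and k ≥ 1, one has the strict inequality C(n+k-1, k-1) · (2n+2k-1) · n! > k · C(2n+2k-1, n). -/
/-! Clearing denominators, the inequality for `k = m + 1` reads
`(m + 1)! (2(n + m))! < n! (n + m)! (n + 2m + 1)!`. Passing from `m` to `m + 1` multiplies the
right side, relative to the left, by `(n + 2m + 2)(n + 2m + 3) / (2(m + 2)(2n + 2m + 1))`, which
is at least `1` because numerator minus denominator is `(n - 1)(n - 2)`. So everything reduces to
`m = 0`, which is `C(2n, n) < (n + 1)!`, i.e. the Catalan number `C(2n, n) / (n + 1)` is less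
than `n!`; this holds from `n = 3` on. -/

namespace Nat

theorem centralBinom_lt_factorial_succ {n : ℕ} (hn : 3 ≤ n) : centralBinom n < (n + 1)! := by
  induction n, hn using Nat.le_induction with
  | base => decide
  | succ n hn ih =>
    have hquad : 2 * (2 * n + 1) ≤ (n + 2) * (n + 1) := by nlinarith
    refine Nat.lt_of_mul_lt_mul_left (a := n + 1) ?_
    calc (n + 1) * centralBinom (n + 1) = 2 * (2 * n + 1) * centralBinom n :=
          succ_mul_centralBinom_succ n
      _ < (n + 2) * (n + 1) * (n + 1)! := Nat.mul_lt_mul_of_le_of_lt hquad ih (by positivity)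
      _ = (n + 1) * (n + 1 + 1)! := by rw [factorial_succ (n + 1)]; ring

theorem factorial_two_mul_lt {n : ℕ} (hn : 3 ≤ n) : (2 * n)! < n ! * n ! * (n + 1)! :=
  calc (2 * n)! = centralBinom n * (n ! * n !) := by
        rw [centralBinom_eq_two_mul_choose, two_mul, ← mul_assoc,
          add_choose_mul_factorial_mul_factorial]
    _ < (n + 1)! * (n ! * n !) :=
        Nat.mul_lt_mul_of_pos_right (centralBinom_lt_factorial_succ hn) (by positivity)
    _ = n ! * n ! * (n + 1)! := by ring

theorem factorial_succ_mul_factorial_two_mul_lt {n : ℕ} (hn : 3 ≤ n) (m : ℕ) :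
    (m + 1)! * (2 * (n + m))! < n ! * (n + m)! * (n + 2 * m + 1)! := by
  induction m with
  | zero => simpa using factorial_two_mul_lt hn
  | succ m ih =>
    have hquad : 2 * (m + 2) * (2 * n + 2 * m + 1) ≤ (n + 2 * m + 2) * (n + 2 * m + 3) := by
      nlinarith
    calc (m + 1 + 1)! * (2 * (n + (m + 1)))!
        = 2 * (m + 2) * (2 * n + 2 * m + 1) * ((n + m + 1) * ((m + 1)! * (2 * (n + m))!)) := by
          rw [show 2 * (n + (m + 1)) = 2 * (n + m) + 1 + 1 by ring]
          simp only [factorial_succ]; ring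
      _ < (n + 2 * m + 2) * (n + 2 * m + 3) *
            ((n + m + 1) * (n ! * (n + m)! * (n + 2 * m + 1)!)) :=
          Nat.mul_lt_mul_of_le_of_lt hquad (Nat.mul_lt_mul_of_pos_left ih (by positivity))
            (by positivity)
      _ = n ! * (n + (m + 1))! * (n + 2 * (m + 1) + 1)! := by
          rw [show n + 2 * (m + 1) + 1 = n + 2 * m + 1 + 1 + 1 by ring]
          simp only [factorial_succ, ← add_assoc]; ring

theorem succ_mul_choose_lt_choose_mul_factorial {n : ℕ} (hn : 3 ≤ n) (m : ℕ) :
    (m + 1) * (2 * n + 2 * m + 1).choose n < (n + m).choose m * (2 * n + 2 * m + 1) * n ! := by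
  have hsmall := add_choose_mul_factorial_mul_factorial n m
  have hlarge := add_choose_mul_factorial_mul_factorial (n + 2 * m + 1) n
  rw [show n + 2 * m + 1 + n = 2 * (n + m) + 1 by ring] at hlarge
  refine Nat.lt_of_mul_lt_mul_right (a := m ! * n ! * (n + 2 * m + 1)!) ?_
  calc (m + 1) * (2 * n + 2 * m + 1).choose n * (m ! * n ! * (n + 2 * m + 1)!)
      = (m + 1)! * (2 * (n + m) + 1)! := by
        rw [factorial_succ m, ← hlarge, show 2 * (n + m) = 2 * n + 2 * m by ring]; ring
    _ = (2 * n + 2 * m + 1) * ((m + 1)! * (2 * (n + m))!) := by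
        rw [factorial_succ (2 * (n + m))]; ring
    _ < (2 * n + 2 * m + 1) * (n ! * (n + m)! * (n + 2 * m + 1)!) :=
        Nat.mul_lt_mul_of_pos_left (factorial_succ_mul_factorial_two_mul_lt hn m) (by omega)
    _ = (n + m).choose m * (2 * n + 2 * m + 1) * n ! * (m ! * n ! * (n + 2 * m + 1)!) := by
        rw [← hsmall]; ring

end Nat

/-- For all natural numbers `n ≥ 3` and `k ≥ 1`,
`C(n+k-1, k-1) * (2n+2k-1) * n! > k * C(2n+2k-1, n)`. -/
theorem abelian_scroll_strict_inequality (n k : ℕ) (hn : 3 ≤ n) (hk : 1 ≤ k) :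
    (n + k - 1).choose (k - 1) * (2 * n + 2 * k - 1) * Nat.factorial n >
      k * (2 * n + 2 * k - 1).choose n := by
  obtain ⟨m, rfl⟩ : ∃ m, k = m + 1 := ⟨k - 1, by omega⟩
  rw [show n + (m + 1) - 1 = n + m by omega, Nat.add_sub_cancel,
    show 2 * n + 2 * (m + 1) - 1 = 2 * n + 2 * m + 1 by omega]
  exact Nat.succ_mul_choose_lt_choose_mul_factorial hn m
end

section
/- For all natural numbers n ≥ 3 and k ≥ 1, one has the strict inequality ∏_{l=2}^{n} ((n+k-l+1) · l) > ∏_{l=2}^{n} (2n+2k-l). -/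
/-!
With `m = n + k - l`, the `l`-th factor on the right is `2 * m + l` and the one on the left is
`(m + 1) * l`, which exceeds it by `m * (l - 2) ≥ 0`. At `l = 3` the excess is `n + k - 3 ≥ 1`.
-/

theorem two_mul_add_le_succ_mul {m l : ℕ} (hl : 2 ≤ l) : 2 * m + l ≤ (m + 1) * l := by
  nlinarith

theorem two_mul_add_lt_succ_mul {m l : ℕ} (hm : 1 ≤ m) (hl : 3 ≤ l) :
    2 * m + l < (m + 1) * l := by
  nlinarith

open Finset in
/-- For all natural numbers `n ≥ 3` and `k ≥ 1`,
`∏_{l=2}^{n} ((n+k-l+1) * l) > ∏_{l=2}^{n} (2n+2k-l)`. -/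
theorem abelian_scroll_product_strict_inequality (n k : ℕ) (hn : 3 ≤ n) (hk : 1 ≤ k) :
    ∏ l ∈ Icc 2 n, ((n + k - l + 1) * l) > ∏ l ∈ Icc 2 n, (2 * n + 2 * k - l) := by
  have right_factor : ∀ l ∈ Icc 2 n, 2 * n + 2 * k - l = 2 * (n + k - l) + l := by
    intro l hl
    have := mem_Icc.1 hl
    omega
  have three_mem : 3 ∈ Icc 2 n := mem_Icc.2 ⟨by norm_num, hn⟩
  refine prod_lt_prod (fun l hl => ?_) (fun l hl => ?_) ⟨3, three_mem, ?_⟩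
  · have := mem_Icc.1 hl
    omega
  · rw [right_factor l hl]
    exact two_mul_add_le_succ_mul (mem_Icc.1 hl).1
  · rw [right_factor 3 three_mem]
    exact two_mul_add_lt_succ_mul (by omega) le_rfl
end
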